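/- For the dihedral group I₂(m) with m odd, the set of conjugacy classes of special involutions has exactly 2 elements (the identity and the class of reflections), while for m even it has exactly 4 elements (the identity, the two conjugacy classes of reflections, and −Id). -/

import Mathlib

noncomputable section

/-- The `(−1)`-eigenspace of an isometry `σ` of the Euclidean plane. -/
def minusEigenspace (σ : EuclideanSpace ℝ (Fin 2) ≃ₗᵢ[ℝ] EuclideanSpace ℝ (Fin 2)) :
    Submodule ℝ (EuclideanSpace ℝ (Fin 2)) :=
  Module.End.eigenspace (σ.toLinearEquiv : EuclideanSpace ℝ (Fin 2) →ₗ[ℝ] _) (-1)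

/-- The `(+1)`-eigenspace of an isometry `σ` of the Euclidean plane. -/
def plusEigenspace (σ : EuclideanSpace ℝ (Fin 2) ≃ₗᵢ[ℝ] EuclideanSpace ℝ (Fin 2)) :
    Submodule ℝ (EuclideanSpace ℝ (Fin 2)) :=
  Module.End.eigenspace (σ.toLinearEquiv : EuclideanSpace ℝ (Fin 2) →ₗ[ℝ] _) 1

/-- The `j`-th root of the dihedral root system `I₂(m)`:
the unit vector at angle `jπ/m`. -/
def dihedralRoot (m j : ℕ) : EuclideanSpace ℝ (Fin 2) := WithLp.toLp 2 fun (i : Fin 2) =>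
  if i = 0 then Real.cos (j * Real.pi / m) else Real.sin (j * Real.pi / m)

/-- `σ` is a *special involution* with respect to the root system `R`:
`σ² = 1` and, for every root `α ∈ R`, the orthogonal projection of `α` onto the
`(−1)`-eigenspace `V₁` of `σ` is proportional to a root lying in `V₁`, or the
projection onto the `(+1)`-eigenspace `V₂` is proportional to a root in `V₂`. -/
def IsSpecialInvolution (R : Finset (EuclideanSpace ℝ (Fin 2)))
    (σ : EuclideanSpace ℝ (Fin 2) ≃ₗᵢ[ℝ] EuclideanSpace ℝ (Fin 2)) : Prop :=
  σ * σ = 1 ∧ ∀ α ∈ R,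
    (∃ c : ℝ, ∃ β ∈ R, β ∈ minusEigenspace σ ∧
      (Submodule.orthogonalProjectionOnto (minusEigenspace σ) α : EuclideanSpace ℝ (Fin 2)) = c • β) ∨
    (∃ c : ℝ, ∃ β ∈ R, β ∈ plusEigenspace σ ∧
      (Submodule.orthogonalProjectionOnto (plusEigenspace σ) α : EuclideanSpace ℝ (Fin 2)) = c • β)

/-!
Realise `I₂(m)` as Mathlib's `DihedralGroup m` acting on `ℂ ≅ ℝ²`: `r i` is a rotation by an
`m`-th root of unity and `sr i` is the reflection `z ↦ -ζ^i z̄` in the line orthogonal to the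
root at angle `iπ/m`. This action is faithful and its image is generated by the root
reflections, so it identifies `G` with `DihedralGroup m`. In the plane every element `g` with
`g² = 1` is special: `±1` have an eigenspace equal to the whole plane, and a root reflection has
the root line as its `(−1)`-eigenspace. So the special classes are the conjugacy classes of
elements of order dividing `2` in `DihedralGroup m`. There `r i` squares to `1` iff `2i = 0`,
and `sr i` is conjugate to `sr j` iff `j - i ∈ 2 ℤ/m`; this gives `{1, [sr 0]}` for `m` odd and
`{1, r (m/2), [sr 0], [sr 1]}` for `m` even.
-/

open ComplexConjugate Complex DihedralGroup

local notation "E²" => EuclideanSpace ℝ (Fin 2)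

def involutionClasses (G : Type*) [Group G] : Set (ConjClasses G) :=
  ConjClasses.mk '' {g : G | g * g = 1}

lemma MulEquiv.ncard_involutionClasses {G H : Type*} [Group G] [Group H] (e : G ≃* H) :
    (involutionClasses H).ncard = (involutionClasses G).ncard := by
  have map_mk (g : G) : ConjClasses.map (e : G →* H) (ConjClasses.mk g) = ConjClasses.mk (e g) :=
    rfl
  have hinj : Function.Injective (ConjClasses.map (e : G →* H)) := by
    intro a b hab
    obtain ⟨a, rfl⟩ := ConjClasses.mk_surjective a
    obtain ⟨b, rfl⟩ := ConjClasses.mk_surjective b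
    rw [map_mk, map_mk, ConjClasses.mk_eq_mk_iff_isConj] at hab
    rw [ConjClasses.mk_eq_mk_iff_isConj]
    simpa using (e.symm : H →* G).map_isConj hab
  rw [← Set.ncard_image_of_injective _ hinj, involutionClasses, involutionClasses, Set.image_image]
  congr 1
  ext c
  constructor
  · rintro ⟨h, hh : h * h = 1, rfl⟩
    exact ⟨e.symm h, show _ * _ = 1 by rw [← map_mul, hh, map_one],
      congrArg ConjClasses.mk (e.apply_symm_apply h)⟩
  · rintro ⟨g, hg : g * g = 1, rfl⟩
    exact ⟨e g, show _ * _ = 1 by rw [← map_mul, hg, map_one], rfl⟩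

namespace ZMod

lemma isUnit_two {n : ℕ} (hn : Odd n) : IsUnit (2 : ZMod n) := by
  simpa using (ZMod.isUnit_iff_coprime 2 n).2 (Nat.coprime_two_left.2 hn)

lemma add_self_eq_zero_iff {k : ℕ} {i : ZMod (2 * k)} : i + i = 0 ↔ i = 0 ∨ i = k := by
  obtain ⟨a, rfl⟩ := ZMod.intCast_surjective i
  constructor
  · intro h
    rw [← Int.cast_add, ZMod.intCast_zmod_eq_zero_iff_dvd] at h
    obtain ⟨c, hc⟩ := h
    obtain ⟨d, rfl | rfl⟩ := Int.even_or_odd' c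
    · left
      rw [ZMod.intCast_zmod_eq_zero_iff_dvd]
      exact ⟨d, by push_cast at hc ⊢; linarith⟩
    · right
      rw [← Int.cast_natCast, ZMod.intCast_eq_intCast_iff_dvd_sub]
      exact ⟨-d, by push_cast at hc ⊢; linarith⟩
  · rintro (h | h) <;> rw [h]
    · rw [add_zero]
    · rw [← Nat.cast_add, ← two_mul, ZMod.natCast_self]

lemma not_exists_one_eq_two_mul {k : ℕ} : ¬∃ q : ZMod (2 * k), 1 = 2 * q := by
  rintro ⟨q, hq⟩
  have h := congrArg (ZMod.castHom (dvd_mul_right 2 k) (ZMod 2)) hq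
  rw [map_one, map_mul, map_ofNat, show (2 : ZMod 2) = 0 from rfl, zero_mul] at h
  exact one_ne_zero h

lemma exists_eq_two_mul_or_eq_one_add_two_mul {n : ℕ} (i : ZMod n) :
    ∃ q, i = 2 * q ∨ i = 1 + 2 * q := by
  obtain ⟨a, rfl⟩ := ZMod.intCast_surjective i
  obtain ⟨q, rfl | rfl⟩ := Int.even_or_odd' a
  · exact ⟨q, Or.inl (by push_cast; ring)⟩
  · exact ⟨q, Or.inr (by push_cast; ring)⟩

end ZMod

namespace DihedralGroup

variable {n : ℕ}

lemma not_isConj_r_sr (i j : ZMod n) : ¬IsConj (r i) (sr j) := by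
  rw [isConj_iff]
  rintro ⟨k | k, h⟩ <;> simp [r_mul_r, sr_mul_r, sr_mul_sr, inv_r, inv_sr] at h

lemma isConj_sr_iff {i j : ZMod n} : IsConj (sr i) (sr j) ↔ ∃ k, j = i + 2 * k := by
  rw [isConj_iff]
  constructor
  · rintro ⟨k | k, h⟩ <;> simp only [r_mul_sr, sr_mul_r, sr_mul_sr, inv_r, inv_sr, sr.injEq] at h
    · exact ⟨-k, by rw [← h]; ring⟩
    · exact ⟨k - i, by rw [← h]; ring⟩
  · rintro ⟨k, rfl⟩
    exact ⟨r (-k), by rw [r_mul_sr, inv_r, sr_mul_r, neg_neg]; ring_nf⟩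

lemma r_mul_self_eq_one_iff {i : ZMod n} : r i * r i = 1 ↔ i + i = 0 := by
  rw [r_mul_r, one_def, r.injEq]

lemma involutionClasses_of_odd (hn : Odd n) :
    involutionClasses (DihedralGroup n) = {ConjClasses.mk 1, ConjClasses.mk (sr 0)} := by
  ext c
  constructor
  · rintro ⟨i | i, hi : _ * _ = 1, rfl⟩
    · rw [r_mul_self_eq_one_iff, ← two_mul, (ZMod.isUnit_two hn).mul_right_eq_zero] at hi
      left
      rw [hi, r_zero]
    · right
      rw [Set.mem_singleton_iff, ConjClasses.mk_eq_mk_iff_isConj, isConj_sr_iff]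
      exact ⟨-((ZMod.isUnit_two hn).unit⁻¹ * i),
        by rw [mul_neg, ← mul_assoc, IsUnit.mul_val_inv, one_mul, add_neg_cancel]⟩
  · rintro (rfl | rfl)
    · exact ⟨1, mul_one 1, rfl⟩
    · exact ⟨sr 0, sr_mul_self 0, rfl⟩

lemma involutionClasses_two_mul (k : ℕ) :
    involutionClasses (DihedralGroup (2 * k)) =
      {ConjClasses.mk 1, ConjClasses.mk (r k), ConjClasses.mk (sr 0), ConjClasses.mk (sr 1)} := by
  ext c
  constructor
  · rintro ⟨i | i, hi : _ * _ = 1, rfl⟩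
    · rcases ZMod.add_self_eq_zero_iff.1 (r_mul_self_eq_one_iff.1 hi) with rfl | rfl
      · exact Or.inl (by rw [r_zero])
      · exact Or.inr (Or.inl rfl)
    · simp only [Set.mem_insert_iff, Set.mem_singleton_iff, ConjClasses.mk_eq_mk_iff_isConj,
        isConj_sr_iff]
      obtain ⟨q, rfl | rfl⟩ := ZMod.exists_eq_two_mul_or_eq_one_add_two_mul i
      · exact Or.inr (Or.inr (Or.inl ⟨-q, by ring⟩))
      · exact Or.inr (Or.inr (Or.inr ⟨-q, by ring⟩))
  · rintro (rfl | rfl | rfl | rfl)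
    · exact ⟨1, mul_one 1, rfl⟩
    · exact ⟨r k, r_mul_self_eq_one_iff.2 (ZMod.add_self_eq_zero_iff.2 (Or.inr rfl)), rfl⟩
    · exact ⟨sr 0, sr_mul_self 0, rfl⟩
    · exact ⟨sr 1, sr_mul_self 1, rfl⟩

lemma ncard_involutionClasses_of_odd (hn : Odd n) :
    (involutionClasses (DihedralGroup n)).ncard = 2 := by
  rw [involutionClasses_of_odd hn, Set.ncard_pair]
  rw [Ne, ConjClasses.mk_eq_mk_iff_isConj, isConj_one_right, one_def]
  exact nofun

lemma ncard_involutionClasses_of_even (hn : Even n) (hn0 : n ≠ 0) :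
    (involutionClasses (DihedralGroup n)).ncard = 4 := by
  obtain ⟨k, rfl⟩ := even_iff_two_dvd.1 hn
  have hk : (k : ZMod (2 * k)) ≠ 0 := by
    rw [Ne, ZMod.natCast_eq_zero_iff]
    exact fun h => by have := Nat.le_of_dvd (by omega) h; omega
  have h1 : ConjClasses.mk (1 : DihedralGroup (2 * k)) ∉
      ({ConjClasses.mk (r k), ConjClasses.mk (sr 0), ConjClasses.mk (sr 1)} : Set _) := by
    simp only [Set.mem_insert_iff, Set.mem_singleton_iff, ConjClasses.mk_eq_mk_iff_isConj,
      isConj_one_right]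
    simp only [one_def, r.injEq, hk, reduceCtorEq, or_self, not_false_eq_true]
  have h2 : ConjClasses.mk (r (k : ZMod (2 * k))) ∉
      ({ConjClasses.mk (sr 0), ConjClasses.mk (sr 1)} : Set _) := by
    simp only [Set.mem_insert_iff, Set.mem_singleton_iff, ConjClasses.mk_eq_mk_iff_isConj,
      not_isConj_r_sr, or_self, not_false_eq_true]
  have h3 : ConjClasses.mk (sr 0 : DihedralGroup (2 * k)) ≠ ConjClasses.mk (sr 1) := by
    rw [Ne, ConjClasses.mk_eq_mk_iff_isConj, isConj_sr_iff]
    simpa using ZMod.not_exists_one_eq_two_mul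
  rw [involutionClasses_two_mul, Set.ncard_insert_of_notMem h1, Set.ncard_insert_of_notMem h2,
    Set.ncard_pair h3]

end DihedralGroup

lemma Complex.reflection_orthogonal_span_singleton_apply {w : ℂ} (hw : ‖w‖ = 1) (z : ℂ) :
    (ℝ ∙ w)ᗮ.reflection z = -(w ^ 2 * conj z) := by
  have hww : conj w * w = 1 := by rw [Complex.conj_mul', hw]; norm_num
  rw [Submodule.reflection_orthogonal_apply, Submodule.reflection_singleton_apply, hw,
    Complex.inner]
  simp only [RCLike.ofReal_one, one_pow, div_one, two_smul, Complex.real_smul,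
    Complex.re_eq_add_conj, map_mul, Complex.conj_conj]
  linear_combination (-z) * hww

namespace LinearIsometryEquiv

variable {𝕜 E F : Type*} [RCLike 𝕜] [SeminormedAddCommGroup E] [SeminormedAddCommGroup F]
  [NormedSpace 𝕜 E] [NormedSpace 𝕜 F]

def conjMulEquiv (e : E ≃ₗᵢ[𝕜] F) : (E ≃ₗᵢ[𝕜] E) ≃* (F ≃ₗᵢ[𝕜] F) where
  toFun f := e.symm.trans (f.trans e)
  invFun g := e.trans (g.trans e.symm)
  left_inv f := by ext; simp
  right_inv g := by ext; simp
  map_mul' f g := by ext; simp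

end LinearIsometryEquiv

abbrev complexToPlane : ℂ ≃ₗᵢ[ℝ] E² := orthonormalBasisOneI.repr

lemma dihedralRoot_eq (m j : ℕ) :
    dihedralRoot m j = complexToPlane (exp (↑(j * Real.pi / m) * I)) := by
  ext i
  fin_cases i
  · simpa [dihedralRoot] using (exp_ofReal_mul_I_re (j * Real.pi / m)).symm
  · simpa [dihedralRoot] using (exp_ofReal_mul_I_im (j * Real.pi / m)).symm

namespace DihedralGroup

variable {n : ℕ} [NeZero n]

variable (n) in
/-- `sr i` acts as `z ↦ -ζ^i z̄` with `ζ = exp (2π I / n)`, the reflection in the line orthogonal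
to the root `exp (iπ I / n)`; the relations of `DihedralGroup n` then force `r i` to act as
multiplication by `ζ^(-i)`. -/
def toComplexIsometry : DihedralGroup n →* (ℂ ≃ₗᵢ[ℝ] ℂ) where
  toFun
    | r i => rotation (ZMod.toCircle (-i))
    | sr i => rotation (-ZMod.toCircle i) * conjLIE
  map_one' := by rw [one_def]; simp only [neg_zero, AddChar.map_zero_eq_one, map_one]
  map_mul' := by
    rintro (i | i) (j | j) <;> ext z <;>
      simp only [r_mul_r, r_mul_sr, sr_mul_r, sr_mul_sr, neg_add_rev, neg_sub,
        AddChar.map_add_eq_mul, AddChar.map_sub_eq_div, AddChar.map_neg_eq_inv,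
        LinearIsometryEquiv.coe_mul, Function.comp_apply, rotation_apply, conjLIE_apply,
        Circle.coe_neg, Circle.coe_mul, Circle.coe_div, Circle.coe_inv, map_mul, map_neg, map_inv₀,
        inv_inv, Complex.conj_conj, ← Circle.coe_inv_eq_conj] <;> ring

lemma toComplexIsometry_r (i : ZMod n) :
    toComplexIsometry n (r i) = rotation (ZMod.toCircle (-i)) := rfl

lemma toComplexIsometry_sr_natCast (j : ℕ) :
    toComplexIsometry n (sr j) = (ℝ ∙ exp (↑(j * Real.pi / n) * I))ᗮ.reflection := by
  ext z : 1
  rw [reflection_orthogonal_span_singleton_apply (norm_exp_ofReal_mul_I _), ← exp_nat_mul]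
  show -(ZMod.toCircle (j : ZMod n) : ℂ) * conj z = _
  rw [ZMod.toCircle_natCast, neg_mul]
  congr 3
  push_cast
  ring

variable (n) in
lemma toComplexIsometry_injective :
    Function.Injective (toComplexIsometry n) := by
  rw [injective_iff_map_eq_one]
  rintro (i | i) h
  · rw [toComplexIsometry_r, ← map_one rotation, rotation_injective.eq_iff,
      ← AddChar.map_zero_eq_one (ZMod.toCircle (N := n)), ZMod.injective_toCircle.eq_iff,
      neg_eq_zero] at h
    rw [h, r_zero]
  · refine absurd (eq_inv_of_mul_eq_one_right h) ?_
    rw [← map_inv]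
    exact (rotation_ne_conjLIE _).symm

variable (n) in
def toPlaneIsometry : DihedralGroup n →* (E² ≃ₗᵢ[ℝ] E²) :=
  (complexToPlane.conjMulEquiv : _ →* _).comp (toComplexIsometry n)

lemma toPlaneIsometry_apply (g : DihedralGroup n) (x : E²) :
    toPlaneIsometry n g x = complexToPlane (toComplexIsometry n g (complexToPlane.symm x)) := rfl

variable (n) in
lemma toPlaneIsometry_injective : Function.Injective (toPlaneIsometry n) :=
  complexToPlane.conjMulEquiv.injective.comp (toComplexIsometry_injective n)

lemma toPlaneIsometry_sr_natCast (j : ℕ) :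
    toPlaneIsometry n (sr j) = (ℝ ∙ dihedralRoot n j)ᗮ.reflection := by
  have hK : (ℝ ∙ dihedralRoot n j)ᗮ =
      (ℝ ∙ exp (↑(j * Real.pi / n) * I))ᗮ.map (complexToPlane.toLinearEquiv : ℂ →ₗ[ℝ] E²) := by
    rw [Submodule.map_orthogonal_equiv, Submodule.map_span, Set.image_singleton, dihedralRoot_eq]
    rfl
  simp only [hK, Submodule.reflection_map, toPlaneIsometry, MonoidHom.comp_apply,
    toComplexIsometry_sr_natCast]
  rfl

lemma range_toPlaneIsometry {R : Finset E²}
    (hR : (R : Set E²) = {v | ∃ j < 2 * n, v = dihedralRoot n j}) :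
    (toPlaneIsometry n).range = Subgroup.closure {g | ∃ α ∈ R, g = (ℝ ∙ α)ᗮ.reflection} := by
  have hsr (i : ZMod n) :
      toPlaneIsometry n (sr i) ∈ Subgroup.closure {g | ∃ α ∈ R, g = (ℝ ∙ α)ᗮ.reflection} := by
    rw [← ZMod.natCast_zmod_val i, toPlaneIsometry_sr_natCast]
    refine Subgroup.subset_closure ⟨_, ?_, rfl⟩
    rw [← Finset.mem_coe, hR]
    exact ⟨_, by have := ZMod.val_lt i; omega, rfl⟩
  refine le_antisymm ?_ ?_
  · rintro _ ⟨i | i, rfl⟩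
    · rw [← sub_zero i, ← sr_mul_sr, map_mul]
      exact mul_mem (hsr 0) (hsr i)
    · exact hsr i
  · rw [Subgroup.closure_le]
    rintro _ ⟨α, hα, rfl⟩
    rw [← Finset.mem_coe, hR] at hα
    obtain ⟨j, -, rfl⟩ := hα
    exact ⟨sr j, toPlaneIsometry_sr_natCast j⟩

end DihedralGroup

section SpecialInvolution

variable {R : Finset E²}

lemma mem_minusEigenspace_iff {σ : E² ≃ₗᵢ[ℝ] E²} {x : E²} :
    x ∈ minusEigenspace σ ↔ σ x = -x := by
  rw [minusEigenspace, Module.End.mem_eigenspace_iff, neg_one_smul]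
  rfl

lemma mem_plusEigenspace_iff {σ : E² ≃ₗᵢ[ℝ] E²} {x : E²} :
    x ∈ plusEigenspace σ ↔ σ x = x := by
  rw [plusEigenspace, Module.End.mem_eigenspace_iff, one_smul]
  rfl

lemma isSpecialInvolution_of_forall_eq_self {σ : E² ≃ₗᵢ[ℝ] E²} (hσ : ∀ x, σ x = x) :
    IsSpecialInvolution R σ := by
  have hmem (x : E²) : x ∈ plusEigenspace σ := mem_plusEigenspace_iff.2 (hσ x)
  refine ⟨by ext x; simp [hσ], fun α hα => Or.inr ⟨1, α, hα, hmem α, ?_⟩⟩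
  rw [one_smul, Submodule.orthogonalProjectionOnto_mem_subspace_eq_self ⟨α, hmem α⟩]

lemma isSpecialInvolution_of_forall_eq_neg {σ : E² ≃ₗᵢ[ℝ] E²} (hσ : ∀ x, σ x = -x) :
    IsSpecialInvolution R σ := by
  have hmem (x : E²) : x ∈ minusEigenspace σ := mem_minusEigenspace_iff.2 (hσ x)
  refine ⟨by ext x; simp [hσ], fun α hα => Or.inl ⟨1, α, hα, hmem α, ?_⟩⟩
  rw [one_smul, Submodule.orthogonalProjectionOnto_mem_subspace_eq_self ⟨α, hmem α⟩]

lemma minusEigenspace_reflection_orthogonal (α : E²) :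
    minusEigenspace (ℝ ∙ α)ᗮ.reflection = ℝ ∙ α := by
  ext x
  rw [mem_minusEigenspace_iff, Submodule.reflection_orthogonal_apply, neg_inj,
    Submodule.reflection_eq_self_iff]

lemma isSpecialInvolution_reflection {α : E²} (hα : α ∈ R) :
    IsSpecialInvolution R (ℝ ∙ α)ᗮ.reflection := by
  refine ⟨Submodule.reflection_mul_reflection _, fun β _ => Or.inl ?_⟩
  have hV := minusEigenspace_reflection_orthogonal α
  obtain ⟨c, hc⟩ := Submodule.mem_span_singleton.1 (hV.le (SetLike.coe_mem
    ((minusEigenspace (ℝ ∙ α)ᗮ.reflection).orthogonalProjectionOnto β)))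
  exact ⟨c, α, hα, hV.ge (Submodule.mem_span_singleton_self α), hc.symm⟩

lemma DihedralGroup.isSpecialInvolution_toPlaneIsometry {n : ℕ} [NeZero n]
    (hR : ∀ j < n, dihedralRoot n j ∈ R) {g : DihedralGroup n} (hg : g * g = 1) :
    IsSpecialInvolution R (toPlaneIsometry n g) := by
  cases g with
  | r i =>
    have hc : (ZMod.toCircle (-i) : ℂ) * ZMod.toCircle (-i) = 1 := by
      rw [r_mul_r, one_def, r.injEq] at hg
      rw [← Circle.coe_mul, ← AddChar.map_add_eq_mul, ← neg_add, hg, neg_zero,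
        AddChar.map_zero_eq_one, Circle.coe_one]
    rcases mul_self_eq_one_iff.1 hc with h | h
    · refine isSpecialInvolution_of_forall_eq_self fun x => ?_
      rw [toPlaneIsometry_apply, toComplexIsometry_r, rotation_apply, h, one_mul,
        LinearIsometryEquiv.apply_symm_apply]
    · refine isSpecialInvolution_of_forall_eq_neg fun x => ?_
      rw [toPlaneIsometry_apply, toComplexIsometry_r, rotation_apply, h, neg_one_mul,
        map_neg, LinearIsometryEquiv.apply_symm_apply]
  | sr i =>
    rw [← ZMod.natCast_zmod_val i, toPlaneIsometry_sr_natCast]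
    exact isSpecialInvolution_reflection (hR _ (ZMod.val_lt i))

end SpecialInvolution

/-- for the dihedral group `I₂(m)` (generated by the reflections of
its root system of `2m` roots in the plane), the set of conjugacy classes of
special involutions has exactly `2` elements when `m` is odd, and exactly `4`
elements when `m` is even. -/
theorem stmt14 (m : ℕ) (hm : 1 ≤ m)
    (R : Finset (EuclideanSpace ℝ (Fin 2)))
    (hR : (R : Set (EuclideanSpace ℝ (Fin 2)))
      = {v | ∃ j < 2 * m, v = dihedralRoot m j})
    (G : Subgroup (EuclideanSpace ℝ (Fin 2) ≃ₗᵢ[ℝ] EuclideanSpace ℝ (Fin 2)))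
    (hG : G = Subgroup.closure {g | ∃ α ∈ R, g = Submodule.reflection (ℝ ∙ α)ᗮ})
    (S : Set (ConjClasses G))
    (hS : S = {c | ∃ g : G, ConjClasses.mk g = c ∧ IsSpecialInvolution R (g : _)}) :
    (Odd m → Nat.card S = 2) ∧ (Even m → Nat.card S = 4) := by
  have : NeZero m := ⟨by omega⟩
  have hrange : (toPlaneIsometry m).range = G := by rw [hG, range_toPlaneIsometry hR]
  have hroots (j : ℕ) (hj : j < m) : dihedralRoot m j ∈ R := by
    rw [← Finset.mem_coe, hR]
    exact ⟨j, by omega, rfl⟩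
  have hS_eq : S = involutionClasses G := by
    rw [hS]
    ext c
    constructor
    · rintro ⟨g, rfl, hg⟩
      exact ⟨g, Subtype.ext hg.1, rfl⟩
    · rintro ⟨g, hg : g * g = 1, rfl⟩
      obtain ⟨d, hd⟩ : (g : E² ≃ₗᵢ[ℝ] E²) ∈ (toPlaneIsometry m).range := hrange.symm ▸ g.2
      have hdd : d * d = 1 :=
        toPlaneIsometry_injective m (by simp [hd, ← Subgroup.coe_mul, hg])
      exact ⟨g, rfl, hd ▸ isSpecialInvolution_toPlaneIsometry hroots hdd⟩
  have e : DihedralGroup m ≃* G :=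
    (MonoidHom.ofInjective (toPlaneIsometry_injective m)).trans (MulEquiv.subgroupCongr hrange)
  rw [hS_eq, Nat.card_coe_set_eq, e.ncard_involutionClasses]
  exact ⟨ncard_involutionClasses_of_odd, fun h => ncard_involutionClasses_of_even h (NeZero.ne m)⟩

end
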